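/- For every feasible solution S of a TL-RIGHTSIZE instance, cost(S) ≥ (1/T) · Σ_{u∈𝓤} p*(u). -/

import Mathlib

/-! Charge every task to the node it is assigned to. At each timeslot the tasks active on a node
of type `B` fit into `cap B`, so in every dimension their relative demands sum to at most one, and
their penalties `p(u|B)` sum to at most `cost B`. Every task is active at some timeslot, so summing
over the `T` timeslots bounds the penalties of all tasks on the node by `T · cost B`; finally
`p*(u) ≤ p(u|type(b))`. -/

open Finset

/-- `p(u|B) = cost(B) · h_avg(u|B)`. -/
noncomputable def penalty {ι U β : Type*} [Fintype ι] (cost : β → ℝ) (cap : β → ι → ℝ)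
    (dem : U → ι → ℝ) (u : U) (B : β) : ℝ :=
  cost B * ((Fintype.card ι : ℝ)⁻¹ * ∑ d, dem u d / cap B d)

lemma penalty_nonneg {ι U β : Type*} [Fintype ι] {cost : β → ℝ} {cap : β → ι → ℝ}
    {dem : U → ι → ℝ} {u : U} {B : β} (hcost : 0 ≤ cost B) (hcap : ∀ d, 0 < cap B d)
    (hdem : ∀ d, 0 ≤ dem u d) : 0 ≤ penalty cost cap dem u B :=
  mul_nonneg hcost <| mul_nonneg (by positivity) <|
    sum_nonneg fun d _ => div_nonneg (hdem d) (hcap d).le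

lemma sum_penalty_le_cost {ι U β : Type*} [Fintype ι] [Nonempty ι] {cost : β → ℝ}
    {cap : β → ι → ℝ} {dem : U → ι → ℝ} {B : β} (hcost : 0 ≤ cost B)
    (hcap : ∀ d, 0 < cap B d) (A : Finset U) (hload : ∀ d, ∑ u ∈ A, dem u d ≤ cap B d) :
    ∑ u ∈ A, penalty cost cap dem u B ≤ cost B := by
  have hrel : ∑ d, (∑ u ∈ A, dem u d) / cap B d ≤ Fintype.card ι := by
    calc ∑ d, (∑ u ∈ A, dem u d) / cap B d ≤ ∑ _d : ι, (1 : ℝ) :=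
          sum_le_sum fun d _ => (div_le_one (hcap d)).mpr (hload d)
      _ = Fintype.card ι := by simp
  calc ∑ u ∈ A, penalty cost cap dem u B
        = cost B * ((Fintype.card ι : ℝ)⁻¹ * ∑ d, (∑ u ∈ A, dem u d) / cap B d) := by
          simp only [penalty, ← mul_sum, sum_div]
          rw [sum_comm]
    _ ≤ cost B * ((Fintype.card ι : ℝ)⁻¹ * Fintype.card ι) := by gcongr
    _ = cost B := by rw [inv_mul_cancel₀ (by positivity), mul_one]

lemma sum_le_card_nsmul_of_forall_sum_active_le {α τ M : Type*} [AddCommMonoid M]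
    [PartialOrder M] [IsOrderedAddMonoid M] (A : Finset α) (I : Finset τ) (active : α → τ → Prop)
    [∀ a t, Decidable (active a t)] (f : α → M) (c : M) (hf : ∀ a ∈ A, 0 ≤ f a)
    (hcover : ∀ a ∈ A, ∃ t ∈ I, active a t)
    (hslot : ∀ t ∈ I, ∑ a ∈ A with active a t, f a ≤ c) :
    ∑ a ∈ A, f a ≤ #I • c := by
  calc ∑ a ∈ A, f a ≤ ∑ a ∈ A, ∑ t ∈ I, if active a t then f a else 0 := by
        refine sum_le_sum fun a ha => ?_
        obtain ⟨t, ht, hat⟩ := hcover a ha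
        calc f a = if active a t then f a else 0 := (if_pos hat).symm
          _ ≤ ∑ t ∈ I, if active a t then f a else 0 :=
            single_le_sum (fun t _ => ite_nonneg (hf a ha) le_rfl) ht
    _ = ∑ t ∈ I, ∑ a ∈ A with active a t, f a := by
        rw [sum_comm]
        simp only [sum_filter]
    _ ≤ ∑ _t ∈ I, c := sum_le_sum hslot
    _ = #I • c := sum_const c

theorem stmt10
    (T D : ℕ) (hT : 1 ≤ T) (hD : 0 < D)
    (U Btype Node : Type) [Fintype U] [Fintype Btype] [Nonempty Btype]
    [Fintype Node] [DecidableEq Node]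
    (cost : Btype → ℝ) (cap : Btype → Fin D → ℝ)
    (dem : U → Fin D → ℝ) (s e : U → ℕ)
    (hcost : ∀ B, 0 < cost B)
    (hcap : ∀ B d, 0 < cap B d)
    (hdem : ∀ u d, 0 ≤ dem u d)
    (hspan : ∀ u, 1 ≤ s u ∧ s u ≤ e u ∧ e u ≤ T)
    (ty : Node → Btype) (assign : U → Node)
    (hfeas : ∀ (b : Node) (t : ℕ), t ∈ Finset.Icc 1 T → ∀ d : Fin D,
      ∑ u ∈ Finset.univ.filter (fun u => assign u = b ∧ s u ≤ t ∧ t ≤ e u), dem u d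
        ≤ cap (ty b) d) :
    (T : ℝ)⁻¹ * ∑ u : U, Finset.univ.inf' Finset.univ_nonempty
        (fun B => cost B * ((D : ℝ)⁻¹ * ∑ d, dem u d / cap B d))
      ≤ ∑ b : Node, cost (ty b) := by
  have : NeZero D := ⟨hD.ne'⟩
  have hnode : ∀ b, ∑ u with assign u = b, penalty cost cap dem u (ty b) ≤ T * cost (ty b) := by
    intro b
    have := sum_le_card_nsmul_of_forall_sum_active_le _ (Icc 1 T) (fun u t => s u ≤ t ∧ t ≤ e u)
      _ _ (fun u _ => penalty_nonneg (hcost _).le (hcap _) (hdem u))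
      (fun u _ => ⟨s u, mem_Icc.mpr ⟨(hspan u).1, (hspan u).2.1.trans (hspan u).2.2⟩,
        le_rfl, (hspan u).2.1⟩)
      (fun t ht => by
        rw [filter_filter]
        exact sum_penalty_le_cost (hcost _).le (hcap _) _ (hfeas b t ht))
    simpa using this
  rw [inv_mul_le_iff₀ (by exact_mod_cast hT), mul_sum]
  calc ∑ u, univ.inf' univ_nonempty (fun B => cost B * ((D : ℝ)⁻¹ * ∑ d, dem u d / cap B d))
      ≤ ∑ u, penalty cost cap dem u (ty (assign u)) := by
        refine sum_le_sum fun u _ => ?_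
        simpa only [penalty, Fintype.card_fin] using inf'_le _ (mem_univ (ty (assign u)))
    _ = ∑ b, ∑ u with assign u = b, penalty cost cap dem u (ty b) := by
        rw [← sum_fiberwise univ assign]
        refine sum_congr rfl fun b _ => sum_congr rfl fun u hu => ?_
        rw [(mem_filter.mp hu).2]
    _ ≤ ∑ b, T * cost (ty b) := sum_le_sum fun b _ => hnode b
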